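/- Let (Y_1,…,Y_n) be a comonotone allocation. Then there exist (g_1,…,g_n) ∈ 𝒢 and constants c_1,…,c_n ∈ ℝ with ∑_{i=1}^n c_i = s̲ such that Y_i = g_i(S − s̲) + c_i (almost surely) for all i. -/

import Mathlib

open MeasureTheory ProbabilityTheory Filter

noncomputable section

variable {Ω : Type*} [MeasurableSpace Ω] (μ : MeasureTheory.Measure Ω) [MeasureTheory.IsProbabilityMeasure μ]

/-- The measure is atomless: every set of positive measure has a subset of strictly
smaller positive measure. -/
def AtomlessMeasure : Prop :=
  ∀ s : Set Ω, MeasurableSet s → μ s ≠ 0 →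
    ∃ t ⊆ s, MeasurableSet t ∧ 0 < μ t ∧ μ t < μ s

/-- The space `𝒳 = L^∞` of essentially bounded random variables. -/
abbrev Xinf : Type _ := Lp ℝ ⊤ μ

variable {μ}

/-- Monotone utility functional on `L^∞`. -/
def UMonotone (U : Xinf μ → ℝ) : Prop :=
  ∀ Z₁ Z₂ : Xinf μ, Z₁ ≤ Z₂ → U Z₁ ≤ U Z₂

/-- Translation invariance. -/
def TranslationInvariant (U : Xinf μ → ℝ) : Prop :=
  ∀ (Z : Xinf μ) (c : ℝ), U (Z + Lp.const ⊤ μ c) = U Z + c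

/-- Law invariance. -/
def LawInvariant (U : Xinf μ → ℝ) : Prop :=
  ∀ Z₁ Z₂ : Xinf μ, IdentDistrib (Z₁ : Ω → ℝ) (Z₂ : Ω → ℝ) μ μ → U Z₁ = U Z₂

/-- Positive homogeneity. -/
def PositivelyHomogeneous (U : Xinf μ → ℝ) : Prop :=
  ∀ (Z : Xinf μ) (t : ℝ), 0 ≤ t → U (t • Z) = t * U Z

/-- Concave order `Z₁ ⪯_ccv Z₂`. -/
def ConcaveOrder (Z₁ Z₂ : Xinf μ) : Prop :=
  ∀ φ : ℝ → ℝ, ConcaveOn ℝ Set.univ φ →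
    ∫ ω, φ (Z₁ ω) ∂μ ≤ ∫ ω, φ (Z₂ ω) ∂μ

/-- Strict concave order `Z₁ ≺_ccv Z₂`. -/
def StrictConcaveOrder (Z₁ Z₂ : Xinf μ) : Prop :=
  ConcaveOrder Z₁ Z₂ ∧
    ∀ φ : ℝ → ℝ, StrictConcaveOn ℝ Set.univ φ →
      ∫ ω, φ (Z₁ ω) ∂μ < ∫ ω, φ (Z₂ ω) ∂μ

/-- Increasing concave order `Z₁ ⪯_icv Z₂`. -/
def IncConcaveOrder (Z₁ Z₂ : Xinf μ) : Prop :=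
  ∀ φ : ℝ → ℝ, Monotone φ → ConcaveOn ℝ Set.univ φ →
    ∫ ω, φ (Z₁ ω) ∂μ ≤ ∫ ω, φ (Z₂ ω) ∂μ

/-- Strict increasing concave order `Z₁ ≺_icv Z₂`. -/
def StrictIncConcaveOrder (Z₁ Z₂ : Xinf μ) : Prop :=
  IncConcaveOrder Z₁ Z₂ ∧
    ∀ φ : ℝ → ℝ, Monotone φ → StrictConcaveOn ℝ Set.univ φ →
      ∫ ω, φ (Z₁ ω) ∂μ < ∫ ω, φ (Z₂ ω) ∂μ

/-- Schur concavity. -/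
def SchurConcave (U : Xinf μ → ℝ) : Prop :=
  ∀ Z₁ Z₂ : Xinf μ, ConcaveOrder Z₁ Z₂ → U Z₁ ≤ U Z₂

/-- Strict Schur concavity. -/
def StrictSchurConcave (U : Xinf μ → ℝ) : Prop :=
  ∀ Z₁ Z₂ : Xinf μ, StrictConcaveOrder Z₁ Z₂ → U Z₁ < U Z₂

/-- S.S.D. preserving. -/
def SSDPreserving (U : Xinf μ → ℝ) : Prop :=
  ∀ Z₁ Z₂ : Xinf μ, IncConcaveOrder Z₁ Z₂ → U Z₁ ≤ U Z₂

/-- Strictly S.S.D. preserving. -/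
def StrictSSDPreserving (U : Xinf μ → ℝ) : Prop :=
  ∀ Z₁ Z₂ : Xinf μ, StrictIncConcaveOrder Z₁ Z₂ → U Z₁ < U Z₂

/-- A tuple of (pointwise defined) random variables is comonotone. -/
def ComonotoneFun {n : ℕ} (Z : Fin n → Ω → ℝ) : Prop :=
  ∀ i j ω₁ ω₂, 0 ≤ (Z i ω₁ - Z i ω₂) * (Z j ω₁ - Z j ω₂)

/-- A tuple of elements of `L^∞` is comonotone if some choice of representatives is. -/
def ComonotoneLp {n : ℕ} (Y : Fin n → Xinf μ) : Prop :=
  ∃ Z : Fin n → Ω → ℝ, (∀ i, (Y i : Ω → ℝ) =ᵐ[μ] Z i) ∧ ComonotoneFun Z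

/-- Assumption 1 of the paper. -/
def Assumption1 {n : ℕ} (U : Fin n → Xinf μ → ℝ) : Prop :=
  ∀ i (Z : Xinf μ),
    Continuous (fun c : ℝ => U i (Z + Lp.const ⊤ μ c)) ∧
    StrictMono (fun c : ℝ => U i (Z + Lp.const ⊤ μ c)) ∧
    Tendsto (fun c : ℝ => U i (Z + Lp.const ⊤ μ c)) atTop atTop

section Alloc

variable {n : ℕ} (U : Fin n → Xinf μ → ℝ) (X : Fin n → Xinf μ)

/-- Allocations of the aggregate endowment `∑ i, X i`. -/
def Alloc : Set (Fin n → Xinf μ) := {Y | ∑ i, Y i = ∑ i, X i}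

/-- Individually rational allocations. -/
def IRset : Set (Fin n → Xinf μ) :=
  {Y | Y ∈ Alloc X ∧ ∀ i, U i (X i) ≤ U i (Y i)}

/-- Pareto-optimal allocations. -/
def POset : Set (Fin n → Xinf μ) :=
  {Y | Y ∈ IRset U X ∧ ¬∃ Y' ∈ IRset U X,
    (∀ i, U i (Y i) ≤ U i (Y' i)) ∧ ∃ j, U j (Y j) < U j (Y' j)}

/-- Weakly Pareto-optimal allocations. -/
def WeakPOset : Set (Fin n → Xinf μ) :=
  {Y | Y ∈ IRset U X ∧ ¬∃ Y' ∈ IRset U X, ∀ i, U i (Y i) < U i (Y' i)}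

/-- Comonotone allocations. -/
def AllocC : Set (Fin n → Xinf μ) := {Y | Y ∈ Alloc X ∧ ComonotoneLp Y}

/-- Comonotone Pareto-optimal allocations. -/
def CPOset : Set (Fin n → Xinf μ) :=
  {Y | Y ∈ IRset U X ∧ ComonotoneLp Y ∧ ¬∃ Y' ∈ IRset U X, ComonotoneLp Y' ∧
    (∀ i, U i (Y i) ≤ U i (Y' i)) ∧ ∃ j, U j (Y j) < U j (Y' j)}

/-- Maximizers of the `λ`-weighted sum of utilities over IR allocations. -/
def SmaxSet (lam : Fin n → ℝ) : Set (Fin n → Xinf μ) :=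
  {Y | Y ∈ IRset U X ∧ ∀ Y' ∈ IRset U X,
    ∑ i, lam i * U i (Y' i) ≤ ∑ i, lam i * U i (Y i)}

/-- Maximizers of the `λ`-weighted sum of utilities over IR comonotone allocations. -/
def CSmaxSet (lam : Fin n → ℝ) : Set (Fin n → Xinf μ) :=
  {Y | Y ∈ IRset U X ∧ ComonotoneLp Y ∧ ∀ Y' ∈ IRset U X, ComonotoneLp Y' →
    ∑ i, lam i * U i (Y' i) ≤ ∑ i, lam i * U i (Y i)}

end Alloc



/-- A distortion function: a nondecreasing map of `[0,1]` into `[0,1]` with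
`T 0 = 0` and `T 1 = 1` (encoded as a function on `ℝ`; only values on `[0,1]` matter). -/
def IsDistortion (T : ℝ → ℝ) : Prop :=
  MonotoneOn T (Set.Icc 0 1) ∧ (∀ x ∈ Set.Icc (0:ℝ) 1, T x ∈ Set.Icc (0:ℝ) 1) ∧
    T 0 = 0 ∧ T 1 = 1

/-- A convex distortion function. -/
def IsConvexDistortion (T : ℝ → ℝ) : Prop :=
  IsDistortion T ∧ ConvexOn ℝ (Set.Icc 0 1) T

/-- A concave distortion function. -/
def IsConcaveDistortion (T : ℝ → ℝ) : Prop :=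
  IsDistortion T ∧ ConcaveOn ℝ (Set.Icc 0 1) T

/-- Sequential closedness under pointwise convergence. -/
def SeqClosedPointwise (𝒯 : Set (ℝ → ℝ)) : Prop :=
  ∀ (T : ℕ → ℝ → ℝ) (T' : ℝ → ℝ), (∀ k, T k ∈ 𝒯) →
    (∀ x, Tendsto (fun k => T k x) atTop (nhds (T' x))) → T' ∈ 𝒯

/-- The Choquet integral `∫ Z d(T ∘ μ)` of a random variable `Z` with respect to
the capacity `T ∘ μ`. -/
def choquet (μ : Measure Ω) (T : ℝ → ℝ) (Z : Ω → ℝ) : ℝ :=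
  (∫ t in Set.Ioi (0:ℝ), T (μ {ω | t < Z ω}).toReal) +
    ∫ t in Set.Iio (0:ℝ), (T (μ {ω | t < Z ω}).toReal - 1)

/-- Choquet integral of an element of `L^∞`. -/
def choquetLp (μ : Measure Ω) [IsProbabilityMeasure μ] (T : ℝ → ℝ) (Z : Lp ℝ ⊤ μ) : ℝ :=
  choquet μ T (Z : Ω → ℝ)

/-- The set `𝒢` of tuples of nondecreasing nonnegative functions on `ℝ₊` summing
to the identity. -/
def Gset (n : ℕ) : Set (Fin n → ℝ → ℝ) :=
  {g | (∀ i, MonotoneOn (g i) (Set.Ici 0)) ∧ (∀ i, ∀ x ≥ (0:ℝ), 0 ≤ g i x) ∧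
    ∀ x ≥ (0:ℝ), ∑ i, g i x = x}

/-- A pair of random variables is comonotone. -/
def ComonotonePair (Z S : Ω → ℝ) : Prop :=
  ∀ ω₁ ω₂, 0 ≤ (Z ω₁ - Z ω₂) * (S ω₁ - S ω₂)

def ComonotonePairLp (Z S : Lp ℝ ⊤ μ) : Prop :=
  ∃ Z' S' : Ω → ℝ, (Z : Ω → ℝ) =ᵐ[μ] Z' ∧ (S : Ω → ℝ) =ᵐ[μ] S' ∧ ComonotonePair Z' S'



/-- The essential infimum `s̲` of an element of `L^∞`. -/
def essInfS (S : Lp ℝ ⊤ μ) : ℝ := essInf (S : Ω → ℝ) μ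

/-- The tail probability `ℙ(S > s̲ + x)`. -/
def tailProbS (S : Lp ℝ ⊤ μ) (x : ℝ) : ℝ :=
  (μ {ω | essInfS S + x < S ω}).toReal

/-- The objective `(T_1,…,T_n) ↦ ∫_0^∞ max_i T_i(ℙ(S > s̲ + x)) dx`. -/
def JobjS {n : ℕ} (S : Lp ℝ ⊤ μ) (T : Fin n → ℝ → ℝ) : ℝ :=
  ∫ x in Set.Ioi (0:ℝ), ⨆ i, T i (tailProbS S x)

open Classical in
/-- The set `L_x` of agents attaining the maximum `max_j T_j(ℙ(S > s̲ + x))`. -/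
def Lset {n : ℕ} (S : Lp ℝ ⊤ μ) (T : Fin n → ℝ → ℝ) (x : ℝ) : Finset (Fin n) :=
  Finset.univ.filter (fun i => T i (tailProbS S x) = ⨆ j, T j (tailProbS S x))


open scoped ENNReal

section ComonoAuxHelpers


lemma real_le_add_forall {a b : ℝ} (h : ∀ ε : ℝ, 0 < ε → a ≤ b + ε) : a ≤ b := by
  by_contra hc
  push_neg at hc
  have := h ((a - b) / 2) (by linarith)
  linarith

noncomputable def extA (R : Set ℝ) (x : ℝ) : ℝ := sSup (R ∩ Set.Iic x)
noncomputable def extB (R : Set ℝ) (x : ℝ) : ℝ := sInf (R ∩ Set.Ioi x)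
noncomputable def extL (F : ℝ → ℝ) (R : Set ℝ) (x : ℝ) : ℝ := sSup (F '' (R ∩ Set.Iic x))
noncomputable def extU (F : ℝ → ℝ) (R : Set ℝ) (x : ℝ) : ℝ := sInf (F '' (R ∩ Set.Ioi x))
noncomputable def extG (F : ℝ → ℝ) (R : Set ℝ) (x : ℝ) : ℝ :=
  extL F R x + (x - extA R x) / (extB R x - extA R x) * (extU F R x - extL F R x)

lemma comono_ext {n : ℕ} (F : Fin n → ℝ → ℝ) (R : Set ℝ) (s : ℝ)
    (hsR : s ∈ R) (hRs : ∀ r ∈ R, s ≤ r) (M : ℝ) (hMR : Set.Ici M ⊆ R)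
    (hmono : ∀ i, ∀ r ∈ R, ∀ r' ∈ R, r ≤ r' → F i r ≤ F i r')
    (hlip : ∀ i, ∀ r ∈ R, ∀ r' ∈ R, r ≤ r' → F i r' - F i r ≤ r' - r)
    (hsum : ∀ r ∈ R, ∑ i, F i r = r) :
    ∃ G : Fin n → ℝ → ℝ, (∀ i, MonotoneOn (G i) (Set.Ici s)) ∧
      (∀ x, s ≤ x → ∑ i, G i x = x) ∧ (∀ r ∈ R, ∀ i, G i r = F i r) := by
  classical
  have hne₁ : ∀ x : ℝ, s ≤ x → (R ∩ Set.Iic x).Nonempty := fun x hx => ⟨s, hsR, hx⟩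
  have hbdd₁ : ∀ x : ℝ, BddAbove (R ∩ Set.Iic x) := fun x => ⟨x, fun r hr => hr.2⟩
  have hne₂ : ∀ x : ℝ, (R ∩ Set.Ioi x).Nonempty := fun x =>
    ⟨max M (x + 1), hMR (Set.mem_Ici.mpr (le_max_left _ _)), lt_of_lt_of_le (lt_add_one x) (le_max_right _ _)⟩
  have hbdd₂ : ∀ x : ℝ, BddBelow (R ∩ Set.Ioi x) := fun x => ⟨x, fun r hr => le_of_lt hr.2⟩
  have hneL : ∀ (i : Fin n) (x : ℝ), s ≤ x → (F i '' (R ∩ Set.Iic x)).Nonempty :=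
    fun i x hx => (hne₁ x hx).image _
  have hbddL : ∀ (i : Fin n) (x : ℝ), BddAbove (F i '' (R ∩ Set.Iic x)) := by
    intro i x
    refine ⟨F i s + (x - s), ?_⟩
    rintro v ⟨r, hr, rfl⟩
    have h1 := hlip i s hsR r hr.1 (hRs r hr.1)
    have h2 : r ≤ x := hr.2
    linarith
  have hneU : ∀ (i : Fin n) (x : ℝ), (F i '' (R ∩ Set.Ioi x)).Nonempty :=
    fun i x => (hne₂ x).image _
  have hbddU : ∀ (i : Fin n) (x : ℝ), BddBelow (F i '' (R ∩ Set.Ioi x)) := by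
    intro i x
    refine ⟨F i s, ?_⟩
    rintro v ⟨r, hr, rfl⟩
    exact hmono i s hsR r hr.1 (hRs r hr.1)
  have haub : ∀ x : ℝ, s ≤ x → extA R x ≤ x :=
    fun x hx => csSup_le (hne₁ x hx) (fun r hr => hr.2)
  have hbge : ∀ x : ℝ, x ≤ extB R x := fun x => le_csInf (hne₂ x) (fun r hr => le_of_lt hr.2)
  have hFleL : ∀ (i : Fin n) (x : ℝ), ∀ r, r ∈ R → r ≤ x → F i r ≤ extL (F i) R x :=
    fun i x r hr hrx => le_csSup (hbddL i x) ⟨r, ⟨hr, hrx⟩, rfl⟩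
  have hUleF : ∀ (i : Fin n) (x : ℝ), ∀ r, r ∈ R → x < r → extU (F i) R x ≤ F i r :=
    fun i x r hr hrx => csInf_le (hbddU i x) ⟨r, ⟨hr, hrx⟩, rfl⟩
  have hLleU : ∀ (i : Fin n) (x : ℝ), s ≤ x → extL (F i) R x ≤ extU (F i) R x := by
    intro i x hx
    refine csSup_le (hneL i x hx) ?_
    rintro v ⟨r, hr, rfl⟩
    refine le_csInf (hneU i x) ?_
    rintro w ⟨r', hr', rfl⟩
    exact hmono i r hr.1 r' hr'.1 (le_trans hr.2 (le_of_lt hr'.2))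
  have hSL : ∀ x : ℝ, s ≤ x → ∑ i, extL (F i) R x = extA R x := by
    intro x hx
    refine le_antisymm ?_ ?_
    · refine real_le_add_forall (fun ε hε => ?_)
      have hδ : 0 < ε / (n + 1) := by positivity
      obtain ⟨r, hr, hrgt⟩ := exists_lt_of_lt_csSup (hne₁ x hx)
        (show extA R x - ε / (n + 1) < extA R x by linarith)
      have hrA : r ≤ extA R x := le_csSup (hbdd₁ x) hr
      have hLb : ∀ i : Fin n, extL (F i) R x ≤ F i r + ε / (n + 1) := by
        intro i
        refine csSup_le (hneL i x hx) ?_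
        rintro v ⟨r', hr', rfl⟩
        rcases le_total r' r with h | h
        · have := hmono i r' hr'.1 r hr.1 h; linarith
        · have h1 := hlip i r hr.1 r' hr'.1 h
          have h2 : r' ≤ extA R x := le_csSup (hbdd₁ x) hr'
          linarith
      have hnδ : (n : ℝ) * (ε / (n + 1)) ≤ ε := by
        rw [mul_comm, div_mul_eq_mul_div, div_le_iff₀ (by positivity)]
        nlinarith [hε]
      calc ∑ i, extL (F i) R x ≤ ∑ i : Fin n, (F i r + ε / (n + 1)) :=
            Finset.sum_le_sum fun i _ => hLb i
        _ = r + n * (ε / (n + 1)) := by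
            rw [Finset.sum_add_distrib, hsum r hr.1, Finset.sum_const, Finset.card_univ,
              Fintype.card_fin, nsmul_eq_mul]
        _ ≤ extA R x + ε := by linarith
    · refine csSup_le (hne₁ x hx) (fun r hr => ?_)
      calc r = ∑ i, F i r := (hsum r hr.1).symm
        _ ≤ ∑ i, extL (F i) R x := Finset.sum_le_sum fun i _ => hFleL i x r hr.1 hr.2
  have hSU : ∀ x : ℝ, s ≤ x → ∑ i, extU (F i) R x = extB R x := by
    intro x hx
    refine le_antisymm ?_ ?_
    · refine le_csInf (hne₂ x) (fun r hr => ?_)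
      calc ∑ i, extU (F i) R x ≤ ∑ i, F i r :=
            Finset.sum_le_sum fun i _ => hUleF i x r hr.1 hr.2
        _ = r := hsum r hr.1
    · refine real_le_add_forall (fun ε hε => ?_)
      have hδ : 0 < ε / (n + 1) := by positivity
      obtain ⟨r, hr, hrlt⟩ := exists_lt_of_csInf_lt (hne₂ x)
        (show extB R x < extB R x + ε / (n + 1) by linarith)
      have hrB : extB R x ≤ r := csInf_le (hbdd₂ x) hr
      have hUb : ∀ i : Fin n, F i r - ε / (n + 1) ≤ extU (F i) R x := by
        intro i
        refine le_csInf (hneU i x) ?_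
        rintro w ⟨r', hr', rfl⟩
        rcases le_total r r' with h | h
        · have := hmono i r hr.1 r' hr'.1 h; linarith
        · have h1 := hlip i r' hr'.1 r hr.1 h
          have h2 : extB R x ≤ r' := csInf_le (hbdd₂ x) hr'
          linarith
      have hnδ : (n : ℝ) * (ε / (n + 1)) ≤ ε := by
        rw [mul_comm, div_mul_eq_mul_div, div_le_iff₀ (by positivity)]
        nlinarith [hε]
      have hsum' : ∑ i : Fin n, (F i r - ε / (n + 1)) = r - n * (ε / (n + 1)) := by
        rw [Finset.sum_sub_distrib, hsum r hr.1, Finset.sum_const, Finset.card_univ,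
          Fintype.card_fin, nsmul_eq_mul]
      have : r - n * (ε / (n + 1)) ≤ ∑ i, extU (F i) R x := by
        rw [← hsum']
        exact Finset.sum_le_sum fun i _ => hUb i
      linarith
  have hGlb : ∀ (i : Fin n) (x : ℝ), s ≤ x → extL (F i) R x ≤ extG (F i) R x := by
    intro i x hx
    have hUL := hLleU i x hx
    have ha := haub x hx
    have hb := hbge x
    have ht : 0 ≤ (x - extA R x) / (extB R x - extA R x) :=
      div_nonneg (by linarith) (by linarith)
    unfold extG
    nlinarith
  have hGub : ∀ (i : Fin n) (x : ℝ), s ≤ x → extG (F i) R x ≤ extU (F i) R x := by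
    intro i x hx
    have hUL := hLleU i x hx
    have ha := haub x hx
    have hb := hbge x
    rcases eq_or_lt_of_le (le_trans ha hb) with h | h
    · have h0 : extB R x - extA R x = 0 := by
        have h1 : extA R x = x := le_antisymm ha (h ▸ hb)
        have h2 : extB R x = x := by rw [← h, h1]
        rw [h1, h2]; ring
      unfold extG
      rw [h0, div_zero, zero_mul, add_zero]
      exact hUL
    · have hden : 0 < extB R x - extA R x := by linarith
      have ht1 : (x - extA R x) / (extB R x - extA R x) ≤ 1 := by
        rw [div_le_one hden]; linarith
      have ht0 : 0 ≤ (x - extA R x) / (extB R x - extA R x) :=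
        div_nonneg (by linarith) (by linarith)
      unfold extG
      nlinarith
  have hGsum : ∀ x : ℝ, s ≤ x → ∑ i, extG (F i) R x = x := by
    intro x hx
    have ha := haub x hx
    have hb := hbge x
    unfold extG
    rw [Finset.sum_add_distrib, hSL x hx, ← Finset.mul_sum, Finset.sum_sub_distrib,
      hSU x hx, hSL x hx]
    rcases eq_or_lt_of_le (le_trans ha hb) with h | h
    · have h1 : extA R x = x := le_antisymm ha (h ▸ hb)
      have h2 : extB R x - extA R x = 0 := by rw [← h]; ring
      rw [h2, mul_zero, add_zero, h1]
    · rw [div_mul_cancel₀ _ (by linarith : extB R x - extA R x ≠ 0)]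
      ring
  have hGR : ∀ r ∈ R, ∀ i : Fin n, extG (F i) R r = F i r := by
    intro r hrR i
    have hrs : s ≤ r := hRs r hrR
    have har : extA R r = r := le_antisymm (haub r hrs) (le_csSup (hbdd₁ r) ⟨hrR, le_refl r⟩)
    have hLr : extL (F i) R r = F i r := by
      refine le_antisymm ?_ (hFleL i r r hrR le_rfl)
      refine csSup_le (hneL i r hrs) ?_
      rintro v ⟨r', hr', rfl⟩
      exact hmono i r' hr'.1 r hrR hr'.2
    unfold extG
    rw [har, hLr, sub_self, zero_div, zero_mul, add_zero]
  refine ⟨fun i x => extG (F i) R x, ?_, hGsum, hGR⟩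
  intro i x hx y hy hxy
  simp only [Set.mem_Ici] at hx hy
  rcases eq_or_lt_of_le hxy with rfl | hlt
  · exact le_rfl
  by_cases hgap : ∃ r ∈ R, x < r ∧ r ≤ y
  · obtain ⟨r, hrR, hxr, hry⟩ := hgap
    calc extG (F i) R x ≤ extU (F i) R x := hGub i x hx
      _ ≤ F i r := hUleF i x r hrR hxr
      _ ≤ extL (F i) R y := hFleL i y r hrR hry
      _ ≤ extG (F i) R y := hGlb i y hy
  · push_neg at hgap
    have hIic : R ∩ Set.Iic x = R ∩ Set.Iic y := by
      ext r
      constructor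
      · rintro ⟨h1, h2⟩
        exact ⟨h1, le_trans h2 hxy⟩
      · rintro ⟨h1, h2⟩
        refine ⟨h1, ?_⟩
        have h2' : r ≤ y := h2
        show r ≤ x
        by_contra hcon
        push_neg at hcon
        exact absurd (hgap r h1 hcon) (not_lt.mpr h2')
    have hIoi : R ∩ Set.Ioi x = R ∩ Set.Ioi y := by
      ext r
      constructor
      · rintro ⟨h1, h2⟩
        have h2' : x < r := h2
        exact ⟨h1, hgap r h1 h2'⟩
      · rintro ⟨h1, h2⟩
        exact ⟨h1, lt_of_le_of_lt hxy h2⟩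
    have hA : extA R x = extA R y := by unfold extA; rw [hIic]
    have hB : extB R x = extB R y := by unfold extB; rw [hIoi]
    have hL : extL (F i) R x = extL (F i) R y := by unfold extL; rw [hIic]
    have hU : extU (F i) R x = extU (F i) R y := by unfold extU; rw [hIoi]
    have hax := haub x hx
    have hby := hbge y
    have hUL := hLleU i x hx
    have hab : extA R x < extB R x := by
      rw [hB]
      calc extA R x ≤ x := hax
        _ < y := hlt
        _ ≤ extB R y := hby
    have hden : 0 < extB R x - extA R x := by linarith
    have hfrac : (x - extA R x) / (extB R x - extA R x) ≤
        (y - extA R x) / (extB R x - extA R x) := by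
      exact (div_le_div_iff_of_pos_right hden).mpr (by linarith)
    simp only [extG]
    rw [← hA, ← hB, ← hL, ← hU]
    have := mul_le_mul_of_nonneg_right hfrac (by linarith : (0:ℝ) ≤ extU (F i) R x - extL (F i) R x)
    linarith

lemma lp_coeFn_finset_sum {Ω' : Type*} [MeasurableSpace Ω'] {μ' : MeasureTheory.Measure Ω'}
    {ι : Type*} (s : Finset ι) (f : ι → Lp ℝ ⊤ μ') :
    ⇑(∑ i ∈ s, f i) =ᵐ[μ'] fun ω => ∑ i ∈ s, (f i : Ω' → ℝ) ω := by
  classical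
  induction s using Finset.induction_on with
  | empty =>
      simp only [Finset.sum_empty]
      exact Lp.coeFn_zero ℝ ⊤ μ'
  | insert a s' ha ih =>
      rw [Finset.sum_insert ha]
      filter_upwards [Lp.coeFn_add (f a) (∑ i ∈ s', f i), ih] with ω h1 h2
      simp only [Finset.sum_insert ha, h1, Pi.add_apply, h2]

set_option maxHeartbeats 2000000 in
lemma comonotone_allocation_representation_aux
    {Ω : Type*} [MeasurableSpace Ω] {μ : MeasureTheory.Measure Ω}
    [MeasureTheory.IsProbabilityMeasure μ]
    {n : ℕ} (hn : 0 < n)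
    (S : Lp ℝ ⊤ μ) (Y : Fin n → Lp ℝ ⊤ μ)
    (hY : ∑ i, Y i = S)
    (hcom : ∃ Z : Fin n → Ω → ℝ, (∀ i, (Y i : Ω → ℝ) =ᵐ[μ] Z i) ∧
      ∀ i j ω₁ ω₂, 0 ≤ (Z i ω₁ - Z i ω₂) * (Z j ω₁ - Z j ω₂)) :
    ∃ g : Fin n → ℝ → ℝ, ((∀ i, MonotoneOn (g i) (Set.Ici 0)) ∧
        (∀ i, ∀ x ≥ (0:ℝ), 0 ≤ g i x) ∧ ∀ x ≥ (0:ℝ), ∑ i, g i x = x) ∧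
      ∃ c : Fin n → ℝ, ∑ i, c i = essInf (S : Ω → ℝ) μ ∧
      ∀ i, (Y i : Ω → ℝ) =ᵐ[μ] fun ω => g i (S ω - essInf (S : Ω → ℝ) μ) + c i := by
  classical
  obtain ⟨Z, hZae, hZcom⟩ := hcom
  set s : ℝ := essInf (S : Ω → ℝ) μ with hs_def
  set T : Ω → ℝ := fun ω => ∑ i, Z i ω with hT_def
  -- key comonotonicity consequence
  have key : ∀ ω₁ ω₂, T ω₂ ≤ T ω₁ → ∀ i, Z i ω₂ ≤ Z i ω₁ ∧ Z i ω₁ - Z i ω₂ ≤ T ω₁ - T ω₂ := by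
    intro ω₁ ω₂ hT
    have hTT : T ω₁ - T ω₂ = ∑ k, (Z k ω₁ - Z k ω₂) := by
      simp only [hT_def, ← Finset.sum_sub_distrib]
    have hd : ∀ j : Fin n, 0 ≤ Z j ω₁ - Z j ω₂ := by
      intro j
      by_contra hneg
      push_neg at hneg
      have hall : ∀ k : Fin n, Z k ω₁ - Z k ω₂ ≤ 0 := by
        intro k
        have := hZcom j k ω₁ ω₂
        nlinarith
      have h2 : ∑ k, (Z k ω₁ - Z k ω₂) ≤ Z j ω₁ - Z j ω₂ := by
        rw [← Finset.add_sum_erase _ _ (Finset.mem_univ j)]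
        have : ∑ k ∈ Finset.univ.erase j, (Z k ω₁ - Z k ω₂) ≤ 0 :=
          Finset.sum_nonpos fun k _ => hall k
        linarith
      rw [← hTT] at h2
      linarith
    intro i
    refine ⟨by linarith [hd i], ?_⟩
    have h1 : ∑ k, (Z k ω₁ - Z k ω₂) = (Z i ω₁ - Z i ω₂) +
        ∑ k ∈ Finset.univ.erase i, (Z k ω₁ - Z k ω₂) :=
      (Finset.add_sum_erase _ _ (Finset.mem_univ i)).symm
    have h2 : 0 ≤ ∑ k ∈ Finset.univ.erase i, (Z k ω₁ - Z k ω₂) :=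
      Finset.sum_nonneg fun k _ => hd k
    rw [hTT, h1]
    linarith
  have hwd : ∀ ω ω', T ω = T ω' → ∀ i, Z i ω = Z i ω' := by
    intro ω ω' h i
    exact le_antisymm ((key ω' ω (le_of_eq h)) i).1 ((key ω ω' (ge_of_eq h)) i).1
  -- a.e. facts
  set C : ℝ := (eLpNorm (S : Ω → ℝ) ⊤ μ).toReal with hC_def
  have hbS : ∀ᵐ ω ∂μ, |S ω| ≤ C := by
    have h1 : ∀ᵐ ω ∂μ, (‖(S : Ω → ℝ) ω‖₊ : ℝ≥0∞) ≤ eLpNormEssSup (S : Ω → ℝ) μ :=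
      ae_le_eLpNormEssSup
    have h2 : eLpNormEssSup (S : Ω → ℝ) μ ≠ ⊤ := by
      have := Lp.eLpNorm_lt_top S
      rw [eLpNorm_exponent_top] at this
      exact this.ne
    filter_upwards [h1] with ω hω
    have h3 := ENNReal.toReal_mono h2 hω
    rw [hC_def, eLpNorm_exponent_top]
    simpa [Real.norm_eq_abs] using h3
  have hS_eq : (S : Ω → ℝ) =ᵐ[μ] fun ω => ∑ i, (Y i : Ω → ℝ) ω := by
    have h := lp_coeFn_finset_sum (Finset.univ) Y
    rw [hY] at h
    exact h
  have hZae' : ∀ᵐ ω ∂μ, ∀ i, (Y i : Ω → ℝ) ω = Z i ω := ae_all_iff.2 hZae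
  have hsae : ∀ᵐ ω ∂μ, s ≤ S ω := by
    refine ae_essInf_le ?_
    refine ⟨-C, ?_⟩
    rw [Filter.eventually_map]
    filter_upwards [hbS] with ω hω
    have := abs_le.1 hω
    exact this.1
  have hA_ae : ∀ᵐ ω ∂μ, (∀ i, (Y i : Ω → ℝ) ω = Z i ω) ∧ S ω = T ω ∧ s ≤ S ω ∧ S ω ≤ C := by
    filter_upwards [hZae', hS_eq, hsae, hbS] with ω h1 h2 h3 h4
    refine ⟨h1, ?_, h3, (abs_le.1 h4).2⟩
    rw [h2]
    exact Finset.sum_congr rfl fun i _ => h1 i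
  set A : Set Ω := {ω | (∀ i, (Y i : Ω → ℝ) ω = Z i ω) ∧ S ω = T ω ∧ s ≤ S ω ∧ S ω ≤ C}
    with hA_def
  have hA_ae' : ∀ᵐ ω ∂μ, ω ∈ A := hA_ae
  have hne : (Filter.NeBot (ae μ)) := ae_neBot.2 (IsProbabilityMeasure.ne_zero μ)
  obtain ⟨ω₀, hω₀⟩ := hA_ae'.exists
  have hTub : ∀ ω ∈ A, T ω ≤ C := fun ω hω => hω.2.1 ▸ hω.2.2.2
  have hTlb : ∀ ω ∈ A, s ≤ T ω := fun ω hω => hω.2.1 ▸ hω.2.2.1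
  have hsC : s ≤ C := le_trans (hTlb ω₀ hω₀) (hTub ω₀ hω₀)
  -- images
  set M' : ℝ := sSup (T '' A) with hM'_def
  have hRAne : (T '' A).Nonempty := ⟨T ω₀, ω₀, hω₀, rfl⟩
  have hRAbdd : BddAbove (T '' A) := ⟨C, by rintro r ⟨ω, hω, rfl⟩; exact hTub ω hω⟩
  have hTleM' : ∀ ω ∈ A, T ω ≤ M' := fun ω hω => le_csSup hRAbdd ⟨ω, hω, rfl⟩
  have hM'leC : M' ≤ C := csSup_le hRAne (by rintro r ⟨ω, hω, rfl⟩; exact hTub ω hω)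
  have hsleM' : s ≤ M' := le_trans (hTlb ω₀ hω₀) (hTleM' ω₀ hω₀)
  have hZIne : ∀ i : Fin n, (Z i '' A).Nonempty := fun i => ⟨Z i ω₀, ω₀, hω₀, rfl⟩
  have hZbddA : ∀ i : Fin n, BddAbove (Z i '' A) := by
    intro i
    refine ⟨Z i ω₀ + (C - s), ?_⟩
    rintro v ⟨ω, hω, rfl⟩
    rcases le_total (T ω₀) (T ω) with h | h
    · have := (key ω ω₀ h i).2
      have h1 := hTub ω hω
      have h2 := hTlb ω₀ hω₀
      linarith
    · have := (key ω₀ ω h i).1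
      linarith [hsC]
  have hZbddB : ∀ i : Fin n, BddBelow (Z i '' A) := by
    intro i
    refine ⟨Z i ω₀ - (C - s), ?_⟩
    rintro v ⟨ω, hω, rfl⟩
    rcases le_total (T ω₀) (T ω) with h | h
    · have := (key ω ω₀ h i).1
      linarith [hsC]
    · have := (key ω₀ ω h i).2
      have h1 := hTub ω₀ hω₀
      have h2 := hTlb ω hω
      linarith
  set zI : Fin n → ℝ := fun i => sInf (Z i '' A) with hzI_def
  set zS : Fin n → ℝ := fun i => sSup (Z i '' A) with hzS_def
  -- pieces bounds
  have hzI_le : ∀ i : Fin n, ∀ ω ∈ A, zI i ≤ Z i ω := fun i ω hω => csInf_le (hZbddB i) ⟨ω, hω, rfl⟩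
  have hzS_ge : ∀ i : Fin n, ∀ ω ∈ A, Z i ω ≤ zS i := fun i ω hω => le_csSup (hZbddA i) ⟨ω, hω, rfl⟩
  have hL3 : ∀ i : Fin n, ∀ ω ∈ A, Z i ω - zI i ≤ T ω - s := by
    intro i ω hω
    have : Z i ω - (T ω - s) ≤ zI i := by
      refine le_csInf (hZIne i) ?_
      rintro v ⟨ω', hω', rfl⟩
      rcases le_total (T ω') (T ω) with h | h
      · have := (key ω ω' h i).2
        have := hTlb ω' hω'
        linarith [(key ω ω' h i).2]
      · have := (key ω' ω h i).1
        have h2 := hTlb ω hω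
        linarith
    linarith
  have hL4 : ∀ i : Fin n, ∀ ω ∈ A, zS i - Z i ω ≤ M' - T ω := by
    intro i ω hω
    have : zS i ≤ Z i ω + (M' - T ω) := by
      refine csSup_le (hZIne i) ?_
      rintro v ⟨ω', hω', rfl⟩
      rcases le_total (T ω') (T ω) with h | h
      · have := (key ω ω' h i).1
        have := hTleM' ω hω
        linarith [(key ω ω' h i).1]
      · have := (key ω' ω h i).2
        have h2 := hTleM' ω' hω'
        linarith
    linarith
  have hL5 : ∀ i : Fin n, zS i - zI i ≤ M' - s := by
    intro i
    have h1 := hL3 i ω₀ hω₀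
    have h2 := hL4 i ω₀ hω₀
    linarith
  -- the function F
  set F : Fin n → ℝ → ℝ := fun i x =>
    if hx : ∃ ω, ω ∈ A ∧ T ω = x then Z i hx.choose
    else if x ≤ s then zI i else zS i + (x - M') / n with hF_def
  have hF_TA : ∀ ω ∈ A, ∀ i, F i (T ω) = Z i ω := by
    intro ω hω i
    have hx : ∃ ω', ω' ∈ A ∧ T ω' = T ω := ⟨ω, hω, rfl⟩
    simp only [hF_def, dif_pos hx]
    exact hwd _ _ hx.choose_spec.2 i
  have hnotTA : ∀ x : ℝ, C + 1 ≤ x → ¬∃ ω, ω ∈ A ∧ T ω = x := by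
    rintro x hx ⟨ω, hω, rfl⟩
    linarith [hTub ω hω]
  have hF_I : ∀ x : ℝ, C + 1 ≤ x → ∀ i, F i x = zS i + (x - M') / n := by
    intro x hx i
    simp only [hF_def, dif_neg (hnotTA x hx)]
    rw [if_neg (by linarith : ¬x ≤ s)]
  have hF_s : (¬∃ ω, ω ∈ A ∧ T ω = s) → ∀ i, F i s = zI i := by
    intro h i
    simp only [hF_def, dif_neg h, if_pos le_rfl]
  -- sums
  have happrox_s : ∀ ε : ℝ, 0 < ε → ∃ ω, ω ∈ A ∧ T ω < s + ε := by
    intro ε hε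
    by_contra h
    push_neg at h
    have hlow : ∀ᵐ ω ∂μ, s + ε ≤ S ω := by
      filter_upwards [hA_ae'] with ω hω
      rw [hω.2.1]
      exact h ω hω
    have h2 : s + ε ≤ essInf (S : Ω → ℝ) μ := by
      refine Filter.le_liminf_of_le ?_ ?_
      · refine Filter.IsBoundedUnder.isCoboundedUnder_ge ⟨C, ?_⟩
        rw [Filter.eventually_map]
        filter_upwards [hbS] with ω hω
        exact (abs_le.1 hω).2
      · exact hlow
    rw [← hs_def] at h2
    linarith
  have happrox_t : ∀ ε : ℝ, 0 < ε → ∃ ω, ω ∈ A ∧ M' - ε < T ω := by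
    intro ε hε
    obtain ⟨r, ⟨ω, hω, rfl⟩, hr⟩ := exists_lt_of_lt_csSup hRAne
      (show M' - ε < M' by linarith)
    exact ⟨ω, hω, hr⟩
  have hzI_sum : ∑ i, zI i = s := by
    refine le_antisymm ?_ ?_
    · refine real_le_add_forall (fun ε hε => ?_)
      obtain ⟨ω, hω, hlt⟩ := happrox_s ε hε
      calc ∑ i, zI i ≤ ∑ i, Z i ω := Finset.sum_le_sum fun i _ => hzI_le i ω hω
        _ = T ω := rfl
        _ ≤ s + ε := le_of_lt hlt
    · refine real_le_add_forall (fun ε hε => ?_)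
      have hδ : 0 < ε / (n + 1) := by positivity
      obtain ⟨ω, hω, hlt⟩ := happrox_s _ hδ
      have h1 : ∀ i : Fin n, Z i ω - (T ω - s) ≤ zI i := fun i => by linarith [hL3 i ω hω]
      have h2 : ∑ i : Fin n, (Z i ω - (T ω - s)) = T ω - n * (T ω - s) := by
        rw [Finset.sum_sub_distrib, Finset.sum_const, Finset.card_univ, Fintype.card_fin,
          nsmul_eq_mul]
      have h3 : T ω - n * (T ω - s) ≤ ∑ i, zI i := by
        rw [← h2]; exact Finset.sum_le_sum fun i _ => h1 i
      have h4 := hTlb ω hω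
      have hn1 : (1 : ℝ) ≤ n := by exact_mod_cast hn
      have h5 : (n : ℝ) * (T ω - s) ≤ n * (ε / (n + 1)) :=
        mul_le_mul_of_nonneg_left (by linarith) (by positivity)
      have hnδ : (n : ℝ) * (ε / (n + 1)) ≤ ε := by
        rw [mul_comm, div_mul_eq_mul_div, div_le_iff₀ (by positivity)]
        nlinarith [hε]
      linarith
  have hzS_sum : ∑ i, zS i = M' := by
    refine le_antisymm ?_ ?_
    · refine real_le_add_forall (fun ε hε => ?_)
      have hδ : 0 < ε / (n + 1) := by positivity
      obtain ⟨ω, hω, hlt⟩ := happrox_t _ hδ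
      have h1 : ∀ i : Fin n, zS i ≤ Z i ω + (M' - T ω) := fun i => by linarith [hL4 i ω hω]
      have h2 : ∑ i : Fin n, (Z i ω + (M' - T ω)) = T ω + n * (M' - T ω) := by
        rw [Finset.sum_add_distrib, Finset.sum_const, Finset.card_univ, Fintype.card_fin,
          nsmul_eq_mul]
      have h3 : ∑ i, zS i ≤ T ω + n * (M' - T ω) := by
        rw [← h2]; exact Finset.sum_le_sum fun i _ => h1 i
      have h4 := hTleM' ω hω
      have h5 : (n : ℝ) * (M' - T ω) ≤ n * (ε / (n + 1)) :=
        mul_le_mul_of_nonneg_left (by linarith) (by positivity)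
      have hnδ : (n : ℝ) * (ε / (n + 1)) ≤ ε := by
        rw [mul_comm, div_mul_eq_mul_div, div_le_iff₀ (by positivity)]
        nlinarith [hε]
      linarith
    · refine real_le_add_forall (fun ε hε => ?_)
      obtain ⟨ω, hω, hlt⟩ := happrox_t ε hε
      calc M' ≤ T ω + ε := by linarith
        _ = ∑ i, Z i ω + ε := rfl
        _ ≤ ∑ i, zS i + ε :=
            add_le_add (Finset.sum_le_sum fun i _ => hzS_ge i ω hω) le_rfl
  -- the domain R
  set R : Set ℝ := (T '' A ∪ {s}) ∪ Set.Ici (C + 1) with hR_def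
  have hsR : s ∈ R := Or.inl (Or.inr rfl)
  have hRs : ∀ r ∈ R, s ≤ r := by
    rintro r ((⟨ω, hω, rfl⟩ | rfl) | hr)
    · exact hTlb ω hω
    · exact le_rfl
    · have : C + 1 ≤ r := hr
      linarith
  have hMR : Set.Ici (C + 1) ⊆ R := fun x hx => Or.inr hx
  have hFcase : ∀ r ∈ R, (∃ ω, ω ∈ A ∧ T ω = r) ∨
      (r = s ∧ ¬∃ ω, ω ∈ A ∧ T ω = r) ∨ (C + 1 ≤ r ∧ ¬∃ ω, ω ∈ A ∧ T ω = r) := by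
    intro r hr
    by_cases h : ∃ ω, ω ∈ A ∧ T ω = r
    · exact Or.inl h
    · rcases hr with (⟨ω, hω, rfl⟩ | rfl) | hri
      · exact absurd ⟨ω, hω, rfl⟩ h
      · exact Or.inr (Or.inl ⟨rfl, h⟩)
      · exact Or.inr (Or.inr ⟨hri, h⟩)
  have hn1 : (1 : ℝ) ≤ n := by exact_mod_cast hn
  have hML : ∀ i : Fin n, ∀ r ∈ R, ∀ r' ∈ R, r ≤ r' →
      F i r ≤ F i r' ∧ F i r' - F i r ≤ r' - r := by
    intro i r hrR r' hrR' hrr'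
    rcases hFcase r hrR with ⟨ω, hω, rfl⟩ | ⟨rfl, hne1⟩ | ⟨hge, hne1⟩
    · rcases hFcase r' hrR' with ⟨ω', hω', rfl⟩ | ⟨rfl, hne2⟩ | ⟨hge2, hne2⟩
      · -- TA, TA
        rw [hF_TA ω hω i, hF_TA ω' hω' i]
        exact ⟨(key ω' ω hrr' i).1, (key ω' ω hrr' i).2⟩
      · -- TA, s : then T ω = s
        have h1 : T ω = s := le_antisymm hrr' (hTlb ω hω)
        exact absurd ⟨ω, hω, h1⟩ hne2
      · -- TA, Ici
        rw [hF_TA ω hω i, hF_I r' hge2 i]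
        have h1 := hzS_ge i ω hω
        have h2 := hL4 i ω hω
        have h3 : M' ≤ r' := by linarith [hM'leC]
        have h4 : 0 ≤ (r' - M') / n := div_nonneg (by linarith) (Nat.cast_nonneg n)
        have h5 : (r' - M') / n ≤ r' - M' := by
          rw [div_le_iff₀ (Nat.cast_pos.mpr hn : (0:ℝ) < n)]
          nlinarith [h3]
        constructor
        · linarith
        · linarith
    · rcases hFcase r' hrR' with ⟨ω', hω', rfl⟩ | ⟨rfl, hne2⟩ | ⟨hge2, hne2⟩
      · -- s, TA
        rw [hF_s hne1 i, hF_TA ω' hω' i]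
        have h1 := hzI_le i ω' hω'
        have h2 := hL3 i ω' hω'
        exact ⟨h1, by linarith⟩
      · -- s, s
        rw [hF_s hne1 i]
        exact ⟨le_rfl, by linarith⟩
      · -- s, Ici
        rw [hF_s hne1 i, hF_I r' hge2 i]
        have h1 : zI i ≤ zS i := le_trans (hzI_le i ω₀ hω₀) (hzS_ge i ω₀ hω₀)
        have h3 : M' ≤ r' := by linarith [hM'leC]
        have h4 : 0 ≤ (r' - M') / n := div_nonneg (by linarith) (Nat.cast_nonneg n)
        have h5 : (r' - M') / n ≤ r' - M' := by
          rw [div_le_iff₀ (Nat.cast_pos.mpr hn : (0:ℝ) < n)]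
          nlinarith [h3]
        have h6 := hL5 i
        constructor
        · linarith
        · linarith
    · rcases hFcase r' hrR' with ⟨ω', hω', rfl⟩ | ⟨rfl, hne2⟩ | ⟨hge2, hne2⟩
      · -- Ici, TA : impossible
        have := hTub ω' hω'
        linarith
      · -- Ici, s : impossible
        linarith [hsC]
      · -- Ici, Ici
        rw [hF_I r hge i, hF_I r' hge2 i]
        have h4 : 0 ≤ (r' - r) / n := div_nonneg (by linarith) (Nat.cast_nonneg n)
        have h5 : (r' - r) / n ≤ r' - r := by
          rw [div_le_iff₀ (Nat.cast_pos.mpr hn : (0:ℝ) < n)]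
          nlinarith
        have h6 : zS i + (r' - M') / n - (zS i + (r - M') / n) = (r' - r) / n := by
          field_simp
          ring
        constructor
        · linarith [h6]
        · linarith [h6]
  have hsum : ∀ r ∈ R, ∑ i, F i r = r := by
    intro r hrR
    rcases hFcase r hrR with ⟨ω, hω, rfl⟩ | ⟨rfl, hne1⟩ | ⟨hge, hne1⟩
    · rw [Finset.sum_congr rfl fun i _ => hF_TA ω hω i]
    · rw [Finset.sum_congr rfl fun i _ => hF_s hne1 i]
      exact hzI_sum
    · rw [Finset.sum_congr rfl fun i _ => hF_I r hge i]
      rw [Finset.sum_add_distrib, hzS_sum, Finset.sum_const, Finset.card_univ,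
        Fintype.card_fin, nsmul_eq_mul]
      rw [mul_div_cancel₀ _ (by exact_mod_cast hn.ne' : (n:ℝ) ≠ 0)]
      ring
  obtain ⟨G, hGmono, hGsum, hGR⟩ := comono_ext F R s hsR hRs (C + 1) hMR
    (fun i r hr r' hr' h => (hML i r hr r' hr' h).1)
    (fun i r hr r' hr' h => (hML i r hr r' hr' h).2) hsum
  refine ⟨fun i x => G i (s + x) - G i s, ⟨?_, ?_, ?_⟩, fun i => G i s, ?_, ?_⟩
  · intro i
    intro x hx y hy hxy
    have hx' : (0:ℝ) ≤ x := hx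
    have hy' : (0:ℝ) ≤ y := hy
    have := hGmono i (show s + x ∈ Set.Ici s by simp only [Set.mem_Ici]; linarith)
      (show s + y ∈ Set.Ici s by simp only [Set.mem_Ici]; linarith) (by linarith)
    simpa using sub_le_sub_right this (G i s)
  · intro i x hx
    show (0:ℝ) ≤ G i (s + x) - G i s
    have := hGmono i Set.self_mem_Ici
      (show s + x ∈ Set.Ici s by simp only [Set.mem_Ici]; linarith) (by linarith)
    linarith
  · intro x hx
    rw [Finset.sum_sub_distrib, hGsum (s + x) (by linarith), hGsum s le_rfl]
    ring
  · exact hGsum s le_rfl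
  · intro i
    filter_upwards [hA_ae'] with ω hω
    have hSR : S ω ∈ R := Or.inl (Or.inl ⟨ω, hω, hω.2.1.symm⟩)
    have h1 : s + (S ω - s) = S ω := by ring
    rw [hω.1 i]
    rw [h1, hGR (S ω) hSR i, hω.2.1, hF_TA ω hω i]
    ring

end ComonoAuxHelpers

/-- Every comonotone allocation of `S` is, up to constants summing to
`s̲ = ess inf S`, given by nondecreasing nonnegative functions of `S - s̲` summing to the
identity. -/
theorem comonotone_allocation_representation
    (hatomless : AtomlessMeasure μ) {n : ℕ} (hn : 0 < n)
    (S : Xinf μ) (Y : Fin n → Xinf μ)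
    (hY : ∑ i, Y i = S) (hcom : ComonotoneLp Y) :
    ∃ g ∈ Gset n, ∃ c : Fin n → ℝ, ∑ i, c i = essInfS S ∧
      ∀ i, (Y i : Ω → ℝ) =ᵐ[μ] fun ω => g i (S ω - essInfS S) + c i := by
  obtain ⟨g, hg, c, hc, hae⟩ := comonotone_allocation_representation_aux hn S Y hY hcom
  exact ⟨g, hg, c, hc, hae⟩

end
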